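/- arXiv:1909.01377 — 2 statements merged into one kernel-verified Lean document; each statement's English description precedes it below -/
import Mathlib

section
/- (Gradient of the Equilibrium Model.) Let d, m, q be natural numbers, f : ℝ^d × ℝ^m → ℝ^d, z* : ℝ^m → ℝ^d, h : ℝ^d → ℝ^q, and fix a target y ∈ ℝ^q and a loss function L : ℝ^q × ℝ^q → ℝ. Suppose: z* is differentiable at u₀; f is differentiable at (z*(u₀), u₀); z*(u) = f(z*(u), u) for all u in a neighborhood of u₀; the linear map I − ∂f/∂z(z*(u₀), u₀) is invertible; h is differentiable at z*(u₀); and L(·, y) is differentiable at h(z*(u₀)). Define ℓ(u) = L(h(z*(u)), y) and J_g = ∂f/∂z(z*(u₀), u₀) − I. Then ℓ is differentiable at u₀ and its derivative is Dℓ(u₀) = −(D(L(·, y))(h(z*(u₀))) ∘ Dh(z*(u₀))) ∘ J_g⁻¹ ∘ ∂f/∂u(z*(u₀), u₀), i.e., ∂ℓ/∂u = −(∂ℓ/∂z*) J_g⁻¹ (∂f/∂u), where ∂ℓ/∂z* = (∂ℓ/∂h)(∂h/∂z*). -/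
private lemma ring_inverse_neg_aux {R : Type*} [Ring R] {x : R} (hx : IsUnit x) :
    Ring.inverse (-x) = -Ring.inverse x := by
  obtain ⟨u, rfl⟩ := hx
  rw [← Units.val_neg, Ring.inverse_unit, Ring.inverse_unit]
  rfl

/-- (Gradient of the Equilibrium Model.) For the loss `ℓ(u) = L(h(z*(u)), y)`
evaluated at the equilibrium `z*(u) = f(z*(u), u)`, the loss is differentiable
at `u₀` with derivative
`Dℓ(u₀) = −(D(L(·,y))(h(z*(u₀))) ∘ Dh(z*(u₀))) ∘ J_g⁻¹ ∘ ∂f/∂u(z*(u₀), u₀)`,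
where `J_g = ∂f/∂z(z*(u₀), u₀) − I`. -/
theorem deq_gradient_of_equilibrium_model (d m q : ℕ)
    (f : (Fin d → ℝ) × (Fin m → ℝ) → (Fin d → ℝ))
    (zstar : (Fin m → ℝ) → (Fin d → ℝ))
    (h : (Fin d → ℝ) → (Fin q → ℝ)) (y : Fin q → ℝ)
    (L : (Fin q → ℝ) → (Fin q → ℝ) → ℝ) (u₀ : Fin m → ℝ)
    (Dz : (Fin m → ℝ) →L[ℝ] (Fin d → ℝ))
    (Df : ((Fin d → ℝ) × (Fin m → ℝ)) →L[ℝ] (Fin d → ℝ))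
    (Dh : (Fin d → ℝ) →L[ℝ] (Fin q → ℝ))
    (DL : (Fin q → ℝ) →L[ℝ] ℝ)
    (hz : HasFDerivAt zstar Dz u₀)
    (hf : HasFDerivAt f Df (zstar u₀, u₀))
    (heq : ∀ᶠ u in nhds u₀, zstar u = f (zstar u, u))
    (hinv : IsUnit (ContinuousLinearMap.id ℝ (Fin d → ℝ) -
      Df.comp (ContinuousLinearMap.inl ℝ (Fin d → ℝ) (Fin m → ℝ))))
    (hh : HasFDerivAt h Dh (zstar u₀))
    (hL : HasFDerivAt (fun w => L w y) DL (h (zstar u₀))) :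
    HasFDerivAt (fun u => L (h (zstar u)) y)
      (-(((DL.comp Dh).comp
            (Ring.inverse (Df.comp (ContinuousLinearMap.inl ℝ (Fin d → ℝ) (Fin m → ℝ)) -
              ContinuousLinearMap.id ℝ (Fin d → ℝ)))).comp
          (Df.comp (ContinuousLinearMap.inr ℝ (Fin d → ℝ) (Fin m → ℝ))))) u₀ := by
  set A := Df.comp (ContinuousLinearMap.inl ℝ (Fin d → ℝ) (Fin m → ℝ)) with hA
  set B := Df.comp (ContinuousLinearMap.inr ℝ (Fin d → ℝ) (Fin m → ℝ)) with hB
  set I := ContinuousLinearMap.id ℝ (Fin d → ℝ) with hI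
  have hpair : HasFDerivAt (fun u => (zstar u, u))
      (Dz.prod (ContinuousLinearMap.id ℝ (Fin m → ℝ))) u₀ := HasFDerivAt.prodMk hz (hasFDerivAt_id u₀)
  have hf' : HasFDerivAt f Df ((fun u => (zstar u, u)) u₀) := hf
  have hcomp : HasFDerivAt (fun u => f (zstar u, u))
      (Df.comp (Dz.prod (ContinuousLinearMap.id ℝ (Fin m → ℝ)))) u₀ :=
    HasFDerivAt.comp (f := fun u => (zstar u, u)) u₀ hf' hpair
  have hz2 : HasFDerivAt zstar
      (Df.comp (Dz.prod (ContinuousLinearMap.id ℝ (Fin m → ℝ)))) u₀ :=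
    HasFDerivAt.congr_of_eventuallyEq hcomp heq
  have hDzeq : Dz = Df.comp (Dz.prod (ContinuousLinearMap.id ℝ (Fin m → ℝ))) :=
    hz.unique hz2
  have hsplit : Df.comp (Dz.prod (ContinuousLinearMap.id ℝ (Fin m → ℝ)))
      = A.comp Dz + B := by
    ext v
    simp only [hA, hB, ContinuousLinearMap.comp_apply, ContinuousLinearMap.add_apply,
      ContinuousLinearMap.prod_apply, ContinuousLinearMap.inl_apply,
      ContinuousLinearMap.inr_apply, ContinuousLinearMap.coe_id', id_eq]
    rw [← map_add, Prod.mk_add_mk, add_zero, zero_add]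
  have h1 : Dz = A.comp Dz + B := hDzeq.trans hsplit
  have hkey : (I - A).comp Dz = B := by
    have h2 : Dz - A.comp Dz = B := by rw [sub_eq_iff_eq_add']; exact h1
    rw [← h2]; ext v; simp [hI]
  have hDz : Dz = (Ring.inverse (I - A)).comp B := by
    rw [← hkey, ← ContinuousLinearMap.comp_assoc, ← ContinuousLinearMap.mul_def,
      Ring.inverse_mul_cancel _ hinv, ContinuousLinearMap.one_def,
      ContinuousLinearMap.id_comp]
  have hneg : Ring.inverse (-(I - A)) = -Ring.inverse (I - A) :=
    ring_inverse_neg_aux hinv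
  have hAI : A - I = -(I - A) := (neg_sub I A).symm
  have hfinal : -(((DL.comp Dh).comp (Ring.inverse (A - I))).comp B)
      = (DL.comp Dh).comp Dz := by
    rw [hAI, hneg, hDz]
    ext v
    simp
  rw [hfinal]
  exact hL.comp u₀ (hh.comp u₀ hz)
end

section
/- (Universality of weight-tied, input-injected deep networks.) Let k ≥ 1 and let d₁, …, d_{k+1} be natural numbers. Consider a k-layer network defined by z² = σ¹(W¹ x + b¹) and z^{i+1} = σ^{i}(W^{i} z^{i} + b^{i}) for i = 2, …, k, where x ∈ ℝ^{d₁}, W^{i} ∈ ℝ^{d_{i+1} × d_i}, b^{i} ∈ ℝ^{d_{i+1}}, and σ^{i} : ℝ^{d_{i+1}} → ℝ^{d_{i+1}} are arbitrary maps. Let V = ℝ^{d₂} × ⋯ × ℝ^{d_{k+1}}. Then there exist a linear map W_z : V → V, a linear map W_x : ℝ^{d₁} → V, a vector b̃ ∈ V, and a map σ : V → V (namely the block-shift matrix with blocks W², …, W^{k} on the subdiagonal, W_x injecting W¹ x into the first block, b̃ the concatenation of b¹, …, b^{k}, and σ the blockwise application of σ¹, …, σ^{k}), such that for every x ∈ ℝ^{d₁}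 and every initialization z̃^{[1]} ∈ V, the k-th iterate of the weight-tied, input-injected update z̃^{[i+1]} = σ(W_z z̃^{[i]} + W_x x + b̃) equals (z², z³, …, z^{k+1}); in particular its last block equals the original network's output z^{k+1}. -/
/-! The weight-tied state stacks all hidden layers `(z², …, z^{k+1})`. The shared update
recomputes block `0` from the input alone and block `i + 1` from block `i` alone, so once the
first `m` blocks are correct they stay correct, and each application fixes one more block:
after `k` steps every block holds the original network's hidden layer, whatever the
initialization. -/

/-- The original `k`-layer network: `origNet … 0 = z² = σ¹(W¹ x + b¹)` and
`origNet … (i+1) = z^{i+3} = σ^{i+2}(W^{i+2} z^{i+2} + b^{i+2})`; in general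
`origNet … i` is the hidden layer `z^{i+2}` of the paper's notation. -/
def origNet (dims : ℕ → ℕ)
    (W : (i : ℕ) → Matrix (Fin (dims (i + 1))) (Fin (dims i)) ℝ)
    (b : (i : ℕ) → Fin (dims (i + 1)) → ℝ)
    (σ : (i : ℕ) → (Fin (dims (i + 1)) → ℝ) → (Fin (dims (i + 1)) → ℝ))
    (x : Fin (dims 0) → ℝ) : (i : ℕ) → Fin (dims (i + 1)) → ℝ
  | 0 => σ 0 ((W 0).mulVec x + b 0)
  | (i + 1) => σ (i + 1) ((W (i + 1)).mulVec (origNet dims W b σ x i) + b (i + 1))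

section Causal

variable {k : ℕ} {E : Fin k → Type*} {F : (Π i, E i) → Π i, E i} {z : Π i, E i}

theorem iterate_apply_eq_of_causal (hF : ∀ v i, (∀ j < i, v j = z j) → F v i = z i)
    (m : ℕ) (v : Π i, E i) {i : Fin k} (hi : i.1 < m) : F^[m] v i = z i := by
  induction m generalizing i with
  | zero => omega
  | succ m ih =>
    rw [Function.iterate_succ_apply']
    exact hF _ i fun j hj => ih (by omega)

theorem iterate_card_eq_of_causal (hF : ∀ v i, (∀ j < i, v j = z j) → F v i = z i)
    (v : Π i, E i) : F^[k] v = z :=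
  funext fun i => iterate_apply_eq_of_causal hF k v i.2

end Causal

section WeightTied

variable (k : ℕ) {dims : ℕ → ℕ} (W : (i : ℕ) → Matrix (Fin (dims (i + 1))) (Fin (dims i)) ℝ)

def blockShift :
    ((i : Fin k) → Fin (dims (i.1 + 1)) → ℝ) →ₗ[ℝ] ((i : Fin k) → Fin (dims (i.1 + 1)) → ℝ) :=
  LinearMap.pi fun
    | ⟨0, _⟩ => 0
    | ⟨j + 1, h⟩ => (W (j + 1)).mulVecLin ∘ₗ LinearMap.proj (⟨j, by omega⟩ : Fin k)

def inputInjection : (Fin (dims 0) → ℝ) →ₗ[ℝ] ((i : Fin k) → Fin (dims (i.1 + 1)) → ℝ) :=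
  LinearMap.pi fun
    | ⟨0, _⟩ => (W 0).mulVecLin
    | ⟨_ + 1, _⟩ => 0

theorem weightTied_update_causal (b : (i : ℕ) → Fin (dims (i + 1)) → ℝ)
    (σ : (i : ℕ) → (Fin (dims (i + 1)) → ℝ) → (Fin (dims (i + 1)) → ℝ))
    (x : Fin (dims 0) → ℝ) (v : (i : Fin k) → Fin (dims (i.1 + 1)) → ℝ) (i : Fin k)
    (hv : ∀ j < i, v j = origNet dims W b σ x j.1) :
    σ i.1 ((blockShift k W v + inputInjection k W x + fun i : Fin k => b i.1) i) =
      origNet dims W b σ x i.1 := by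
  rcases i with ⟨_ | j, hj⟩
  · simp [blockShift, inputInjection, origNet]
  · have hprev := hv ⟨j, by omega⟩ (Fin.mk_lt_mk.mpr j.lt_succ_self)
    simp [blockShift, inputInjection, origNet, hprev]

end WeightTied

/-- (Universality of weight-tied, input-injected deep networks.) Any
traditional `k`-layer network `z² = σ¹(W¹x + b¹)`,
`z^{i+1} = σ^i(W^i z^i + b^i)` can be represented by a weight-tied,
input-injected network on `V = ℝ^{d₂} × ⋯ × ℝ^{d_{k+1}}`: there exist linear
maps `W_z : V →ₗ V`, `W_x : ℝ^{d₁} →ₗ V`, a bias `b̃ ∈ V`, and a map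
`σ : V → V` such that for every input `x` and every initialization `z̃^{[1]}`,
the `k`-th iterate of `z̃ ↦ σ(W_z z̃ + W_x x + b̃)` equals `(z², …, z^{k+1})`;
in particular its last block equals the original output `z^{k+1}`. -/
theorem weight_tied_universality (k : ℕ) (hk : 1 ≤ k) (dims : ℕ → ℕ)
    (W : (i : ℕ) → Matrix (Fin (dims (i + 1))) (Fin (dims i)) ℝ)
    (b : (i : ℕ) → Fin (dims (i + 1)) → ℝ)
    (σ : (i : ℕ) → (Fin (dims (i + 1)) → ℝ) → (Fin (dims (i + 1)) → ℝ)) :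
    ∃ (Wz : ((i : Fin k) → Fin (dims (i.1 + 1)) → ℝ) →ₗ[ℝ]
            ((i : Fin k) → Fin (dims (i.1 + 1)) → ℝ))
      (Wx : (Fin (dims 0) → ℝ) →ₗ[ℝ] ((i : Fin k) → Fin (dims (i.1 + 1)) → ℝ))
      (btilde : (i : Fin k) → Fin (dims (i.1 + 1)) → ℝ)
      (σbig : ((i : Fin k) → Fin (dims (i.1 + 1)) → ℝ) →
              ((i : Fin k) → Fin (dims (i.1 + 1)) → ℝ)),
      ∀ (x : Fin (dims 0) → ℝ) (zinit : (i : Fin k) → Fin (dims (i.1 + 1)) → ℝ),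
        (fun v => σbig (Wz v + Wx x + btilde))^[k] zinit =
          (fun i : Fin k => origNet dims W b σ x i.1) ∧
        ((fun v => σbig (Wz v + Wx x + btilde))^[k] zinit) ⟨k - 1, by omega⟩ =
          origNet dims W b σ x (k - 1) := by
  refine ⟨blockShift k W, inputInjection k W, fun i => b i.1, fun v i => σ i.1 (v i),
    fun x zinit => ?_⟩
  have hstack := iterate_card_eq_of_causal (weightTied_update_causal k W b σ x) zinit
  exact ⟨hstack, by rw [hstack]⟩
end
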